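/- Let E = {v ∈ 𝔽₂⁶ : v₁ + v₂ + v₃ + v₄ + v₅ + v₆ = 0} be the even-weight subspace of 𝔽₂⁶, and let S₀ = {(0,0,0,0,0,0), (1,1,0,0,0,0), (1,0,1,0,0,0), (1,0,0,1,0,0), (1,0,0,0,1,0), (1,0,0,0,0,1)}. Then every 6-element subset S of E in which no two distinct elements are at Hamming distance exactly 4 is obtained from S₀ by a coordinate permutation followed by a translation: there exist a permutation σ of the 6 coordinates and t ∈ E such that S = {t + σ·x : x ∈ S₀}, where (σ·x)ᵢ = x_{σ⁻¹(i)}. In particular, S₀ and its translate by (1,1,1,1,1,1) are two disjoint such 6-element subsets of E. -/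

import Mathlib

/-- The even-weight subspace `E = {v ∈ 𝔽₂⁶ : v₁ + ⋯ + v₆ = 0}`. -/
def evenSix : Set (Fin 6 → ZMod 2) :=
  {v | ∑ i : Fin 6, v i = 0}

/-- The reference set `S₀ ⊆ 𝔽₂⁶`. -/
def S0 : Set (Fin 6 → ZMod 2) :=
  {![0,0,0,0,0,0], ![1,1,0,0,0,0], ![1,0,1,0,0,0],
   ![1,0,0,1,0,0], ![1,0,0,0,1,0], ![1,0,0,0,0,1]}

/-- A good set: a 6-element subset of the even-weight subspace `E ⊆ 𝔽₂⁶` in which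
no two distinct elements are at Hamming distance exactly 4. -/
def goodSix (S : Set (Fin 6 → ZMod 2)) : Prop :=
  S ⊆ evenSix ∧ S.ncard = 6 ∧
  ∀ x ∈ S, ∀ y ∈ S, x ≠ y → hammingDist x y ≠ 4

/-! Translating by an element of `S`, we may assume `0 ∈ S`. Every other element of `S` has even
weight different from 4, so it is either the all-ones vector or of weight 2; the all-ones vector is
at distance 4 from every weight-2 vector, so the five nonzero elements all have weight 2, i.e. they
are edges of `K₆`. Two such edges are at distance 4 exactly when they are disjoint, so the five
edges pairwise meet. More than three pairwise-meeting edges share a vertex `v`, and then they are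
all five edges at `v`: swapping the coordinates `0` and `v` carries `S₀` onto `S`. -/

open Finset

namespace Finset

variable {α : Type*} [DecidableEq α]

theorem eq_pair_of_card_eq_two {s : Finset α} {a b : α} (hs : #s = 2) (ha : a ∈ s) (hb : b ∈ s)
    (hab : a ≠ b) : s = {a, b} :=
  (eq_of_subset_of_card_le (insert_subset ha (singleton_subset_iff.2 hb))
    (by rw [hs, card_pair hab])).symm

theorem exists_forall_mem_of_intersecting_of_card_eq_two {F : Finset (Finset α)}
    (hF : (F : Set (Finset α)).Intersecting) (hF₂ : ∀ s ∈ F, #s = 2) (hcard : 3 < #F) :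
    ∃ a, ∀ s ∈ F, a ∈ s := by
  have meets : ∀ s ∈ F, ∀ {a b : α}, {a, b} ∈ F → a ∈ s ∨ b ∈ s := fun s hs a b hab => by
    obtain ⟨x, hxs, hx⟩ := not_disjoint_iff.1 (hF hs hab)
    rw [mem_insert, mem_singleton] at hx
    rcases hx with rfl | rfl <;> simp [hxs]
  obtain ⟨s, hs⟩ : F.Nonempty := card_pos.1 (by omega)
  obtain ⟨a, b, hab, rfl⟩ := card_eq_two.1 (hF₂ s hs)
  by_contra! hnot
  obtain ⟨y, hy, hay⟩ := hnot a
  obtain ⟨z, hz, hbz⟩ := hnot b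
  obtain ⟨c, hcy, hcz⟩ := not_disjoint_iff.1 (hF hy hz)
  have hby : b ∈ y := (meets y hy hs).resolve_left hay
  have haz : a ∈ z := (meets z hz hs).resolve_right hbz
  have hbc : b ≠ c := by rintro rfl; exact hbz hcz
  have hac : a ≠ c := by rintro rfl; exact hay hcy
  rw [eq_pair_of_card_eq_two (hF₂ y hy) hby hcy hbc] at hy
  rw [eq_pair_of_card_eq_two (hF₂ z hz) haz hcz hac] at hz
  -- the three pairs form a triangle, and a pair meeting all three sides is a side
  have hsub : F ⊆ {{a, b}, {b, c}, {a, c}} := by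
    intro w hw
    have pair : ∀ {p q}, p ∈ w → q ∈ w → p ≠ q → w = {p, q} :=
      eq_pair_of_card_eq_two (hF₂ w hw)
    rcases meets w hw hs with ha | hb
    · rcases meets w hw hy with hb | hc
      · simp [pair ha hb hab]
      · simp [pair ha hc hac]
    · rcases meets w hw hz with ha | hc
      · simp [pair ha hb hab]
      · simp [pair hb hc hbc]
  have := (card_le_card hsub).trans card_le_three
  omega

end Finset

section Hamming

variable {ι : Type*} [Fintype ι]

theorem hammingNorm_comp_equiv {β : Type*} [Zero β] [DecidableEq β] (x : ι → β)
    (σ : Equiv.Perm ι) :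
    hammingNorm (fun i => x (σ i)) = hammingNorm x := by
  simp only [hammingNorm, card_filter]
  exact Equiv.sum_comp σ fun i => if x i ≠ 0 then 1 else 0

theorem hammingDist_add_left {β : Type*} [AddCommGroup β] [DecidableEq β] (t x y : ι → β) :
    hammingDist (t + x) (t + y) = hammingDist x y := by
  rw [hammingDist_eq_hammingNorm, hammingDist_eq_hammingNorm]
  congr 1
  abel

theorem support_injective_zmod_two [DecidableEq ι] :
    Function.Injective fun x : ι → ZMod 2 => ({i | x i ≠ 0} : Finset ι) := by
  intro x y h
  funext i
  have hi := congrArg (i ∈ ·) h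
  simp only [mem_filter, mem_univ, true_and, eq_iff_iff] at hi
  generalize x i = a, y i = b at hi
  revert a b; decide

end Hamming

theorem eq_one_or_hammingNorm_eq_two {x : Fin 6 → ZMod 2} (hx : x ∈ evenSix) (hx0 : x ≠ 0)
    (hx4 : hammingNorm x ≠ 4) : x = 1 ∨ hammingNorm x = 2 := by
  revert x; simp only [evenSix, Set.mem_ofPred_eq]; decide

theorem hammingDist_one_of_hammingNorm_eq_two {x : Fin 6 → ZMod 2} (hx : hammingNorm x = 2) :
    hammingDist x 1 = 4 := by
  revert x; decide

set_option maxRecDepth 10000 in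
theorem not_disjoint_support_of_hammingDist_ne_four {x y : Fin 6 → ZMod 2}
    (hx : hammingNorm x = 2) (hy : hammingNorm y = 2) (hxy : hammingDist x y ≠ 4) :
    ¬ Disjoint ({i | x i ≠ 0} : Finset (Fin 6)) ({i | y i ≠ 0} : Finset (Fin 6)) := by
  revert x y; decide

theorem mem_S0_of_hammingNorm_eq_two {x : Fin 6 → ZMod 2} (hx : hammingNorm x = 2)
    (hx0 : x 0 ≠ 0) : x ∈ S0 := by
  revert x; simp only [S0, Set.mem_insert_iff, Set.mem_singleton_iff]; decide

theorem S0_ncard : S0.ncard = 6 := by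
  rw [S0, Set.ncard_eq_toFinset_card']
  decide

theorem zero_mem_S0 : (0 : Fin 6 → ZMod 2) ∈ S0 :=
  Or.inl (by decide)

theorem goodSix_S0 : goodSix S0 := by
  refine ⟨?_, S0_ncard, ?_⟩
  · simp only [S0, Set.insert_subset_iff, Set.singleton_subset_iff, evenSix, Set.mem_ofPred_eq]
    decide
  · simp only [S0, Set.mem_insert_iff, Set.mem_singleton_iff]
    decide

theorem disjoint_S0_image_add_one : Disjoint S0 ((fun x => ![1,1,1,1,1,1] + x) '' S0) := by
  rw [Set.disjoint_left]
  rintro _ hx ⟨y, hy, rfl⟩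
  revert y
  simp only [S0, Set.mem_insert_iff, Set.mem_singleton_iff]
  decide

namespace goodSix

variable {S T : Set (Fin 6 → ZMod 2)}

theorem image_add_left (hS : goodSix S) {t : Fin 6 → ZMod 2} (ht : t ∈ evenSix) :
    goodSix ((t + ·) '' S) := by
  obtain ⟨hE, hcard, hdist⟩ := hS
  refine ⟨?_, ?_, ?_⟩
  · rintro _ ⟨x, hx, rfl⟩
    have hx' : ∑ i, x i = 0 := hE hx
    have ht' : ∑ i, t i = 0 := ht
    show ∑ i, (t i + x i) = 0
    rw [sum_add_distrib, ht', hx', add_zero]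
  · rwa [Set.ncard_image_of_injective _ (add_right_injective t)]
  · rintro _ ⟨x, hx, rfl⟩ _ ⟨y, hy, rfl⟩ hxy
    rw [hammingDist_add_left]
    exact hdist x hx y hy (ne_of_apply_ne _ hxy)

theorem hammingNorm_eq_two (hT : goodSix T) (h0 : 0 ∈ T) {x : Fin 6 → ZMod 2} (hx : x ∈ T)
    (hx0 : x ≠ 0) : hammingNorm x = 2 := by
  obtain ⟨hE, hcard, hdist⟩ := hT
  have weight : ∀ x ∈ T, x ≠ 0 → x = 1 ∨ hammingNorm x = 2 := fun x hx hx0 =>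
    eq_one_or_hammingNorm_eq_two (hE hx) hx0 (hammingDist_zero_right x ▸ hdist x hx 0 h0 hx0)
  refine (weight x hx hx0).resolve_left ?_
  rintro rfl
  have hpair : ({0, 1} : Set (Fin 6 → ZMod 2)).ncard < T.ncard := by
    rw [hcard]
    exact (Set.ncard_insert_le _ _).trans_lt (by rw [Set.ncard_singleton]; norm_num)
  obtain ⟨y, hy, hy01⟩ := Set.exists_mem_notMem_of_ncard_lt_ncard hpair
  simp only [Set.mem_insert_iff, Set.mem_singleton_iff, not_or] at hy01
  exact hdist y hy 1 hx hy01.2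
    (hammingDist_one_of_hammingNorm_eq_two ((weight y hy hy01.1).resolve_left hy01.2))

theorem exists_forall_ne_zero (hT : goodSix T) (h0 : 0 ∈ T) :
    ∃ v, ∀ x ∈ T, x ≠ 0 → x v ≠ 0 := by
  set T' := (Set.toFinite T).toFinset.erase 0
  have mem_T' : ∀ {x}, x ∈ T' ↔ x ∈ T ∧ x ≠ 0 := by simp [T', and_comm]
  set F := T'.image fun x => ({i | x i ≠ 0} : Finset (Fin 6))
  have hF : (F : Set (Finset (Fin 6))).Intersecting := by
    simp only [Set.Intersecting, coe_image, Set.mem_image, mem_coe, F]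
    rintro _ ⟨x, hx, rfl⟩ _ ⟨y, hy, rfl⟩
    rw [mem_T'] at hx hy
    refine not_disjoint_support_of_hammingDist_ne_four (hT.hammingNorm_eq_two h0 hx.1 hx.2)
      (hT.hammingNorm_eq_two h0 hy.1 hy.2) fun h4 => ?_
    obtain rfl | hxy := eq_or_ne x y
    · simp at h4
    · exact hT.2.2 x hx.1 y hy.1 hxy h4
  have hF₂ : ∀ s ∈ F, #s = 2 := by
    simp only [F, mem_image]
    rintro _ ⟨x, hx, rfl⟩
    exact hT.hammingNorm_eq_two h0 (mem_T'.1 hx).1 (mem_T'.1 hx).2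
  have hFcard : #F = 5 := by
    rw [card_image_of_injective _ support_injective_zmod_two,
      card_erase_of_mem ((Set.Finite.mem_toFinset _).2 h0), ← Set.ncard_eq_toFinset_card,
      hT.2.1]
  obtain ⟨v, hv⟩ := exists_forall_mem_of_intersecting_of_card_eq_two hF hF₂ (by omega)
  exact ⟨v, fun x hx hx0 => by simpa using hv _ (mem_image_of_mem _ (mem_T'.2 ⟨hx, hx0⟩))⟩

theorem exists_perm_eq_image_S0 (hT : goodSix T) (h0 : 0 ∈ T) :
    ∃ σ : Equiv.Perm (Fin 6), T = (fun x i => x (σ⁻¹ i)) '' S0 := by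
  obtain ⟨v, hv⟩ := hT.exists_forall_ne_zero h0
  set σ := Equiv.swap 0 v
  refine ⟨σ, Set.eq_of_subset_of_ncard_le (fun x hx => ?_) ?_ (Set.toFinite _)⟩
  · obtain rfl | hx0 := eq_or_ne x 0
    · exact ⟨0, zero_mem_S0, rfl⟩
    refine ⟨fun i => x (σ i), mem_S0_of_hammingNorm_eq_two ?_ ?_, by simp [σ]⟩
    · rw [hammingNorm_comp_equiv]
      exact hT.hammingNorm_eq_two h0 hx hx0
    · simpa [σ] using hv x hx hx0
  · have hinj : Function.Injective fun (x : Fin 6 → ZMod 2) i => x (σ⁻¹ i) :=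
      fun x y h => funext fun i => by simpa using congrFun h (σ i)
    rw [Set.ncard_image_of_injective _ hinj, hT.2.1, S0_ncard]

end goodSix

theorem goodSix_classification :
    (∀ S : Set (Fin 6 → ZMod 2), goodSix S →
      ∃ (σ : Equiv.Perm (Fin 6)) (t : Fin 6 → ZMod 2), t ∈ evenSix ∧
        S = (fun x => t + fun i => x (σ⁻¹ i)) '' S0) ∧
    goodSix S0 ∧
    goodSix ((fun x => ![1,1,1,1,1,1] + x) '' S0) ∧
    Disjoint S0 ((fun x => ![1,1,1,1,1,1] + x) '' S0) := by
  refine ⟨fun S hS => ?_, goodSix_S0,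
    goodSix_S0.image_add_left (by simp only [evenSix, Set.mem_ofPred_eq]; decide),
    disjoint_S0_image_add_one⟩
  obtain ⟨t, ht⟩ : S.Nonempty := Set.nonempty_of_ncard_ne_zero (by rw [hS.2.1]; norm_num)
  have htranslate : Function.LeftInverse (t + ·) (t + ·) := fun x => by
    simp only [← add_assoc, CharTwo.add_self_eq_zero, zero_add]
  obtain ⟨σ, hσ⟩ := (hS.image_add_left (hS.1 ht)).exists_perm_eq_image_S0
    ⟨t, ht, CharTwo.add_self_eq_zero t⟩
  refine ⟨σ, t, hS.1 ht, ?_⟩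
  rw [← Set.image_image, ← hσ, htranslate.image_image]
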